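/- The following three conditions on the Hermitian form are equivalent: (1) for all subspaces L ⊆ M of E with M = M^⊥⊥, one has (L^⊥ ∩ M)^⊥ ∩ M = L^⊥⊥; (2) for every subspace L of E with L = L^⊥⊥, one has L + L^⊥ = E; (3) for all subspaces M ⊆ N of E with M = M^⊥⊥, one has M + (N ∩ M^⊥) = N. -/
import Mathlib


/-- A (nondegenerate) Hermitian space: a division ring `K` with an involution,
a left `K`-vector space `E`, and a Hermitian form on `E`. -/
structure HermitianSpace (K E : Type*) [DivisionRing K] [AddCommGroup E] [Module K E] where
  star : K → K
  star_add : ∀ a b : K, star (a + b) = star a + star b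
  star_mul : ∀ a b : K, star (a * b) = star b * star a
  star_star : ∀ a : K, star (star a) = a
  form : E → E → K
  form_add_left : ∀ x y z : E, form (x + y) z = form x z + form y z
  form_add_right : ∀ x y z : E, form x (y + z) = form x y + form x z
  form_smul_left : ∀ (ρ : K) (x y : E), form (ρ • x) y = ρ * form x y
  form_smul_right : ∀ (ρ : K) (x y : E), form x (ρ • y) = form x y * star ρ
  nondeg : ∀ a : E, (∀ x : E, form a x = 0) → a = 0
  hermitian : ∀ x y : E, star (form x y) = form y x

namespace HermitianSpace

variable {K E : Type*} [DivisionRing K] [AddCommGroup E] [Module K E]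

/-- The orthogonal companion `M^⊥` of a subspace `M`. -/
def perp (h : HermitianSpace K E) (M : Submodule K E) : Submodule K E where
  carrier := {x : E | ∀ m ∈ M, h.form x m = 0}
  add_mem' := fun {a b} ha hb => by
    intro m hm
    rw [h.form_add_left, ha m hm, hb m hm, add_zero]
  zero_mem' := by
    intro m hm
    have h0 : h.form ((0 : K) • (0 : E)) m = 0 * h.form 0 m := h.form_smul_left 0 0 m
    simpa using h0
  smul_mem' := fun c a ha => by
    intro m hm
    rw [h.form_smul_left, ha m hm, mul_zero]

/-- The form is orthomodular when `M + M^⊥ = E` for every closed subspace `M`. -/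
def Orthomodular (h : HermitianSpace K E) : Prop :=
  ∀ M : Submodule K E, h.perp (h.perp M) = M → M ⊔ h.perp M = ⊤

/-- The form is anisotropic when `⟨x, x⟩ ≠ 0` for every nonzero `x`. -/
def Anisotropic (h : HermitianSpace K E) : Prop :=
  ∀ x : E, x ≠ 0 → h.form x x ≠ 0

end HermitianSpace

namespace HermitianSpace

variable {K E : Type*} [DivisionRing K] [AddCommGroup E] [Module K E]
  (h : HermitianSpace K E)

lemma mem_perp' {M : Submodule K E} {x : E} :
    x ∈ h.perp M ↔ ∀ m ∈ M, h.form x m = 0 := Iff.rfl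

lemma star_zero' : h.star 0 = 0 := by
  have := h.star_add 0 0
  simpa using this.symm

lemma form_zero_right (x : E) : h.form x 0 = 0 := by
  have := h.form_add_right x 0 0
  simp only [add_zero] at this
  have := left_eq_add.mp this
  exact this

lemma form_zero_left (x : E) : h.form 0 x = 0 := by
  have := h.form_add_left 0 0 x
  simp only [add_zero] at this
  exact left_eq_add.mp this

lemma form_neg_left (x y : E) : h.form (-x) y = - h.form x y := by
  have := h.form_add_left x (-x) y
  rw [add_neg_cancel, h.form_zero_left] at this
  exact eq_neg_of_add_eq_zero_right this.symm

lemma form_neg_right (x y : E) : h.form x (-y) = - h.form x y := by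
  have := h.form_add_right x y (-y)
  rw [add_neg_cancel, h.form_zero_right] at this
  exact eq_neg_of_add_eq_zero_right this.symm

lemma form_sub_left (x y z : E) : h.form (x - y) z = h.form x z - h.form y z := by
  rw [sub_eq_add_neg, h.form_add_left, h.form_neg_left, sub_eq_add_neg]

lemma form_sub_right (x y z : E) : h.form x (y - z) = h.form x y - h.form x z := by
  rw [sub_eq_add_neg, h.form_add_right, h.form_neg_right, sub_eq_add_neg]

lemma form_symm_zero {x y : E} (hxy : h.form x y = 0) : h.form y x = 0 := by
  rw [← h.hermitian x y, hxy, h.star_zero']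

lemma perp_antitone {M N : Submodule K E} (hMN : M ≤ N) : h.perp N ≤ h.perp M :=
  fun _x hx m hm => hx m (hMN hm)

lemma le_biperp (M : Submodule K E) : M ≤ h.perp (h.perp M) :=
  fun m hm z hz => h.form_symm_zero (hz m hm)

lemma perp_perp_perp (M : Submodule K E) :
    h.perp (h.perp (h.perp M)) = h.perp M :=
  le_antisymm (h.perp_antitone (h.le_biperp M)) (h.le_biperp (h.perp M))

lemma perp_bot : h.perp (⊥ : Submodule K E) = ⊤ := by
  rw [eq_top_iff]
  intro x _ m hm
  rw [Submodule.mem_bot] at hm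
  rw [hm, h.form_zero_right]

lemma perp_top : h.perp (⊤ : Submodule K E) = ⊥ := by
  rw [eq_bot_iff]
  intro x hx
  exact Submodule.mem_bot K |>.mpr (h.nondeg x fun m => hx m trivial)

/-- Direction (2) ⇒ (1). -/
lemma aux_two_imp_one
    (h2 : ∀ L : Submodule K E, h.perp (h.perp L) = L → L ⊔ h.perp L = ⊤)
    (L M : Submodule K E) (hLM : L ≤ M) (hM : h.perp (h.perp M) = M) :
    h.perp (h.perp L ⊓ M) ⊓ M = h.perp (h.perp L) := by
  apply le_antisymm
  · intro x hx
    obtain ⟨hx1, hx2⟩ := Submodule.mem_inf.mp hx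
    intro z hz
    have hz' : z ∈ M ⊔ h.perp M := by rw [h2 M hM]; trivial
    obtain ⟨m, hm, p, hp, rfl⟩ := Submodule.mem_sup.mp hz'
    have hpL : p ∈ h.perp L := h.perp_antitone hLM hp
    have hmL : m ∈ h.perp L := by
      have := (h.perp L).sub_mem hz hpL
      simpa using this
    have e1 : h.form x m = 0 := hx1 m (Submodule.mem_inf.mpr ⟨hmL, hm⟩)
    have e2 : h.form x p = 0 := h.form_symm_zero (hp x hx2)
    rw [h.form_add_right, e1, e2, add_zero]
  · refine le_inf (h.perp_antitone inf_le_left) ?_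
    rw [← hM]
    exact h.perp_antitone (h.perp_antitone hLM)

/-- Direction (1) ⇒ (2). -/
lemma aux_one_imp_two
    (h1 : ∀ L M : Submodule K E, L ≤ M → h.perp (h.perp M) = M →
      h.perp (h.perp L ⊓ M) ⊓ M = h.perp (h.perp L))
    (M : Submodule K E) (hM : h.perp (h.perp M) = M) : M ⊔ h.perp M = ⊤ := by
  have hMPM : M ⊓ h.perp M = ⊥ := by
    have hb := h1 ⊥ M bot_le hM
    rw [h.perp_bot, top_inf_eq, h.perp_top] at hb
    rw [inf_comm]
    exact hb
  rw [eq_top_iff]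
  intro x _
  by_cases hex : ∃ m₀ ∈ M, h.form m₀ x ≠ 0
  · obtain ⟨m₀, hm₀M, hm₀x⟩ := hex
    let f : E →ₗ[K] K :=
      { toFun := fun v => h.form v x
        map_add' := fun a b => h.form_add_left a b x
        map_smul' := fun c v => h.form_smul_left c v x }
    set L : Submodule K E := M ⊓ LinearMap.ker f with hLdef
    have hLM : L ≤ M := inf_le_left
    have hLx : ∀ l ∈ L, h.form l x = 0 := fun l hl => (Submodule.mem_inf.mp hl).2
    have hxPL : x ∈ h.perp L := fun l hl => h.form_symm_zero (hLx l hl)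
    by_cases hPLM : h.perp L ⊓ M = ⊥
    · exfalso
      have hb := h1 L M hLM hM
      rw [hPLM, h.perp_bot, top_inf_eq] at hb
      have hpp : h.perp M = h.perp L := by rw [hb, h.perp_perp_perp]
      have : h.form x m₀ = 0 := (hpp ▸ hxPL) m₀ hm₀M
      exact hm₀x (h.form_symm_zero this)
    · obtain ⟨m, hmmem, hm0⟩ := (Submodule.ne_bot_iff _).mp hPLM
      obtain ⟨hmPL, hmM⟩ := Submodule.mem_inf.mp hmmem
      have hdecomp : ∀ w ∈ M, w - (h.form w x * (h.form m₀ x)⁻¹) • m₀ ∈ L := by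
        intro w hw
        refine Submodule.mem_inf.mpr ⟨M.sub_mem hw (M.smul_mem _ hm₀M), ?_⟩
        have : h.form (w - (h.form w x * (h.form m₀ x)⁻¹) • m₀) x = 0 := by
          rw [h.form_sub_left, h.form_smul_left, mul_assoc,
            inv_mul_cancel₀ hm₀x, mul_one, sub_self]
        exact LinearMap.mem_ker.mpr this
      have hmm₀ : h.form m m₀ ≠ 0 := by
        intro hz
        have hmPM : m ∈ h.perp M := by
          intro w hw
          have e1 : h.form m (w - (h.form w x * (h.form m₀ x)⁻¹) • m₀) = 0 :=
            hmPL _ (hdecomp w hw)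
          rw [h.form_sub_right, h.form_smul_right, hz, zero_mul, sub_zero] at e1
          exact e1
        exact hm0 (Submodule.mem_bot K |>.mp
          (hMPM ▸ Submodule.mem_inf.mpr ⟨hmM, hmPM⟩))
      set ρ : K := h.form x m₀ * (h.form m m₀)⁻¹ with hρ
      have hresm₀ : h.form (x - ρ • m) m₀ = 0 := by
        rw [h.form_sub_left, h.form_smul_left, hρ, mul_assoc,
          inv_mul_cancel₀ hmm₀, mul_one, sub_self]
      have hres : x - ρ • m ∈ h.perp M := by
        intro w hw
        set σ : K := h.form w x * (h.form m₀ x)⁻¹ with hσ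
        have hl : w - σ • m₀ ∈ L := hdecomp w hw
        have e1 : h.form (x - ρ • m) (w - σ • m₀) = 0 := by
          rw [h.form_sub_left, hxPL _ hl, h.form_smul_left, hmPL _ hl,
            mul_zero, sub_zero]
        have e2 : h.form (x - ρ • m) (σ • m₀) = 0 := by
          rw [h.form_smul_right, hresm₀, zero_mul]
        have := h.form_sub_right (x - ρ • m) w (σ • m₀)
        rw [e1, e2, sub_zero] at this
        exact this.symm
      have hxeq : ρ • m + (x - ρ • m) = x := by abel
      have := Submodule.add_mem_sup (M.smul_mem ρ hmM) hres
      rwa [hxeq] at this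
  · push_neg at hex
    exact Submodule.mem_sup_right fun w hw => h.form_symm_zero (hex w hw)

end HermitianSpace

/-- The three equivalent formulations of orthomodularity for a Hermitian form:
(1) relative biperps of subspaces of closed subspaces, (2) `L + L^⊥ = E` for
closed `L`, (3) relative orthomodular law. -/
theorem orthomodular_tfae {K E : Type*} [DivisionRing K] [AddCommGroup E] [Module K E]
    (h : HermitianSpace K E) :
    ((∀ L M : Submodule K E, L ≤ M → h.perp (h.perp M) = M →
        h.perp (h.perp L ⊓ M) ⊓ M = h.perp (h.perp L)) ↔
      (∀ L : Submodule K E, h.perp (h.perp L) = L → L ⊔ h.perp L = ⊤)) ∧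
    ((∀ L : Submodule K E, h.perp (h.perp L) = L → L ⊔ h.perp L = ⊤) ↔
      (∀ M N : Submodule K E, M ≤ N → h.perp (h.perp M) = M →
        M ⊔ (N ⊓ h.perp M) = N)) := by
  constructor
  · constructor
    · exact fun h1 => h.aux_one_imp_two h1
    · exact fun h2 => h.aux_two_imp_one h2
  · constructor
    · intro h2 M N hMN hM
      apply le_antisymm
      · exact sup_le hMN inf_le_left
      · intro n hn
        have hn' : n ∈ M ⊔ h.perp M := by rw [h2 M hM]; trivial
        obtain ⟨m, hm, p, hp, rfl⟩ := Submodule.mem_sup.mp hn'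
        refine Submodule.add_mem_sup hm (Submodule.mem_inf.mpr ⟨?_, hp⟩)
        simpa using N.sub_mem hn (hMN hm)
    · intro h3 L hL
      have := h3 L ⊤ le_top hL
      simpa using this
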